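/- Let r = [r_0, ..., r_m] and c = [c_0, ..., c_n] be strictly increasing sequences of natural numbers with r_0 ≤ c_n, and let {r̂, ĉ} be an ordered sub-pair for {r, c} of length p+1. Then the (m+1)×(p+1) real matrix A with (i,j) entry (1/r_i!) · D^{r_i}[x ↦ x^{ĉ_j}](1) has full column rank, i.e., rank(A) = p+1. -/

import Mathlib

/-- `{r ∘ α, c ∘ β}` (restricted to indices `0, …, p`) is an ordered sub-pair of
length `p + 1` for the pair of finite sequences `[r 0, …, r m]`, `[c 0, …, c n]`:
`α` and `β` are strictly increasing selections of indices (so `r ∘ α` is a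
subsequence of `[r 0, …, r m]` and `c ∘ β` is a subsequence of `[c 0, …, c n]`)
and `r (α i) ≤ c (β i)` for all `i = 0, …, p`. -/
def OrderedSubPair (r c : ℕ → ℕ) (m n p : ℕ) (α β : ℕ → ℕ) : Prop :=
  StrictMonoOn α (Set.Iic p) ∧ StrictMonoOn β (Set.Iic p) ∧
    α p ≤ m ∧ β p ≤ n ∧ ∀ i ≤ p, r (α i) ≤ c (β i)

/-!
Since `D^k[x ↦ x ^ n](1) / k! = C(n, k)`, the rows `α 0 < ⋯ < α p` of the matrix form the square
binomial matrix `[C(b j, a i)]` with `a = r ∘ α`, `b = c ∘ β` strictly increasing and `a ≤ b`.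
Such a matrix has positive determinant, by induction on its size. By
`C(b, a) C(a, k) = C(b, k) C(b - k, a - k)`, shifting all indices down by `k = a 0` changes the
determinant by a positive factor. Once `a 0 = 0` the first row is all ones; taking differences of
adjacent columns, the hockey-stick identity and multilinearity write the determinant as a sum of
determinants of smaller binomial matrices, all nonnegative by induction and one of them positive.
-/

open Matrix Finset

section BinomialMatrix

variable {R : Type*} [CommRing R] {q : ℕ}

variable (R) in
def binomialMatrix (a b : Fin q → ℕ) : Matrix (Fin q) (Fin q) R :=
  of fun i j => ((b j).choose (a i) : R)

@[simp]
lemma binomialMatrix_apply (a b : Fin q → ℕ) (i j : Fin q) :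
    binomialMatrix R a b i j = (b j).choose (a i) := rfl

lemma det_binomialMatrix_eq_zero_of_lt {a b : Fin (q + 1) → ℕ} (ha : Monotone a)
    (h : b 0 < a 0) : (binomialMatrix R a b).det = 0 :=
  det_eq_zero_of_column_eq_zero 0 fun i => by
    simp [Nat.choose_eq_zero_of_lt (h.trans_le (ha (Fin.zero_le i)))]

lemma prod_choose_mul_det_binomialMatrix {a : Fin q → ℕ} (b : Fin q → ℕ) {k : ℕ}
    (hk : ∀ i, k ≤ a i) :
    (∏ i, ((a i).choose k : R)) * (binomialMatrix R a b).det =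
      (∏ j, ((b j).choose k : R)) *
        (binomialMatrix R (fun i => a i - k) (fun j => b j - k)).det := by
  have key : diagonal (fun i => ((a i).choose k : R)) * binomialMatrix R a b =
      binomialMatrix R (fun i => a i - k) (fun j => b j - k) *
        diagonal (fun j => ((b j).choose k : R)) := by
    ext i j
    simp only [diagonal_mul, mul_diagonal, binomialMatrix_apply]
    norm_cast
    rw [mul_comm, Nat.choose_mul (hk i), mul_comm]
  simpa [det_mul, det_diagonal, mul_comm] using congrArg det key

lemma sum_Ico_choose_eq_sub (k : ℕ) {x y : ℕ} (h : x ≤ y) :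
    ∑ t ∈ Ico x y, (t.choose k : R) = y.choose (k + 1) - x.choose (k + 1) := by
  induction y, h using Nat.le_induction with
  | base => simp
  | succ y hy ih =>
    rw [sum_Ico_succ_top hy, ih, Nat.choose_succ_succ]
    push_cast
    ring

lemma det_of_sum_col {n ι : Type*} [Fintype n] [DecidableEq n] [DecidableEq ι]
    (T : n → Finset ι) (v : ι → n → R) :
    (of fun i j => ∑ t ∈ T j, v t i).det =
      ∑ g ∈ Fintype.piFinset T, (of fun i j => v (g j) i).det := by
  rw [← det_transpose]
  have := (detRowAlternating : (n → R) [⋀^n]→ₗ[R] R).toMultilinearMap.map_sum_finset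
    (fun _ t => v t) T
  convert this using 1
  · congr 1; ext j i; simp
  · refine sum_congr rfl fun g _ => ?_
    rw [← det_transpose]; rfl

lemma det_binomialMatrix_eq_sum {a b : Fin (q + 1) → ℕ} (ha : StrictMono a) (hb : Monotone b)
    (ha0 : a 0 = 0) :
    (binomialMatrix R a b).det =
      ∑ g ∈ Fintype.piFinset fun j : Fin q => Ico (b j.castSucc) (b j.succ),
        (binomialMatrix R (fun i => a i.succ - 1) g).det := by
  set M := binomialMatrix R a b
  -- subtract from each column its left neighbour; the first row becomes `(1, 0, …, 0)`
  let B : Matrix (Fin (q + 1)) (Fin (q + 1)) R :=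
    of fun i j => Fin.cases (M i 0) (fun j' => M i j'.succ - M i j'.castSucc) j
  have hMB : M.det = B.det :=
    det_eq_of_forall_col_eq_smul_add_pred (fun _ => 1) (fun _ => rfl) fun i j => by simp [B]
  have hB0 : ∀ j : Fin q, B 0 j.succ = 0 := by simp [B, M, ha0]
  have hBsucc : B.submatrix Fin.succ Fin.succ =
      of fun i j => ∑ t ∈ Ico (b j.castSucc) (b j.succ), (t.choose (a i.succ - 1) : R) := by
    ext i j
    have h1 : 0 < a i.succ := ha0 ▸ ha (Fin.succ_pos i)
    simp only [submatrix_apply, of_apply]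
    rw [sum_Ico_choose_eq_sub _ (hb (Fin.castSucc_le_succ j)), Nat.sub_add_cancel h1]
    simp [B, M]
  rw [hMB, det_succ_row_zero, Fin.sum_univ_succ]
  have hB00 : B 0 0 = 1 := by simp [B, M, ha0]
  simp only [hB0, hB00, mul_zero, zero_mul, sum_const_zero, add_zero, Fin.succAbove_zero,
    Fin.val_zero, pow_zero, one_mul, hBsucc, det_of_sum_col]
  rfl

end BinomialMatrix

lemma strictMono_of_mem_piFinset_Ico {q : ℕ} {d : Fin (q + 1) → ℕ} (hd : Monotone d)
    {g : Fin q → ℕ} (hg : g ∈ Fintype.piFinset fun j => Ico (d j.castSucc) (d j.succ)) :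
    StrictMono g := by
  intro i j hij
  rw [Fintype.mem_piFinset] at hg
  calc g i < d i.succ := (mem_Ico.mp (hg i)).2
    _ ≤ d j.castSucc := hd (Fin.succ_le_castSucc_iff.mpr hij)
    _ ≤ g j := (mem_Ico.mp (hg j)).1

lemma strictMono_succ_sub_zero_sub_one {q : ℕ} {a : Fin (q + 1) → ℕ} (ha : StrictMono a) :
    StrictMono fun i : Fin q => a i.succ - a 0 - 1 := by
  intro i j hij
  show a i.succ - a 0 - 1 < a j.succ - a 0 - 1
  have := ha (Fin.succ_pos i)
  have := ha (Fin.succ_lt_succ_iff.mpr hij)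
  omega

section Ordered

variable {K : Type*} [Field K] [LinearOrder K] [IsStrictOrderedRing K] {q : ℕ}

lemma exists_pos_det_binomialMatrix_eq_mul_sum {a b : Fin (q + 1) → ℕ} (ha : StrictMono a)
    (hb : StrictMono b) (h : a 0 ≤ b 0) :
    ∃ c : K, 0 < c ∧ (binomialMatrix K a b).det = c * ∑ g ∈ Fintype.piFinset
      (fun j : Fin q => Ico (b j.castSucc - a 0) (b j.succ - a 0)),
        (binomialMatrix K (fun i => a i.succ - a 0 - 1) g).det := by
  have ha0 : ∀ i, a 0 ≤ a i := fun i => ha.monotone (Fin.zero_le i)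
  have hb0 : ∀ j, a 0 ≤ b j := fun j => h.trans (hb.monotone (Fin.zero_le j))
  have hA : 0 < ∏ i, ((a i).choose (a 0) : K) :=
    prod_pos fun i _ => Nat.cast_pos.mpr (Nat.choose_pos (ha0 i))
  have hB : 0 < ∏ j, ((b j).choose (a 0) : K) :=
    prod_pos fun j _ => Nat.cast_pos.mpr (Nat.choose_pos (hb0 j))
  refine ⟨(∏ j, ((b j).choose (a 0) : K)) / ∏ i, ((a i).choose (a 0) : K), div_pos hB hA, ?_⟩
  have hshift := prod_choose_mul_det_binomialMatrix (R := K) b ha0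
  rw [det_binomialMatrix_eq_sum (fun i j hij => Nat.sub_lt_sub_right (ha0 i) (ha hij))
    (fun i j hij => Nat.sub_le_sub_right (hb.monotone hij) _) (Nat.sub_self _)] at hshift
  rw [div_mul_eq_mul_div, eq_div_iff hA.ne', mul_comm, hshift]

lemma det_binomialMatrix_nonneg {a b : Fin q → ℕ} (ha : StrictMono a) (hb : StrictMono b) :
    0 ≤ (binomialMatrix K a b).det := by
  induction q with
  | zero => simp
  | succ q ih =>
    rcases lt_or_ge (b 0) (a 0) with h | h
    · exact (det_binomialMatrix_eq_zero_of_lt ha.monotone h).ge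
    · obtain ⟨c, hc, hdet⟩ := exists_pos_det_binomialMatrix_eq_mul_sum (K := K) ha hb h
      rw [hdet]
      exact mul_nonneg hc.le (sum_nonneg fun g hg => ih (strictMono_succ_sub_zero_sub_one ha)
        (strictMono_of_mem_piFinset_Ico (d := fun j => b j - a 0)
          (fun i j hij => Nat.sub_le_sub_right (hb.monotone hij) _) hg))

lemma det_binomialMatrix_pos {a b : Fin q → ℕ} (ha : StrictMono a) (hb : StrictMono b)
    (hab : ∀ i, a i ≤ b i) : 0 < (binomialMatrix K a b).det := by
  induction q with
  | zero => simp
  | succ q ih =>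
    obtain ⟨c, hc, hdet⟩ := exists_pos_det_binomialMatrix_eq_mul_sum (K := K) ha hb (hab 0)
    have hb' : Monotone fun j => b j - a 0 :=
      fun i j hij => Nat.sub_le_sub_right (hb.monotone hij) _
    -- the summand `g j = b (j + 1) - a 0 - 1` is again a binomial matrix with `a ≤ b`
    have hmem : (fun j : Fin q => b j.succ - a 0 - 1) ∈ Fintype.piFinset
        (fun j : Fin q => Ico (b j.castSucc - a 0) (b j.succ - a 0)) := by
      refine Fintype.mem_piFinset.mpr fun j => mem_Ico.mpr ?_
      have := hab 0
      have := hb (Fin.castSucc_lt_succ (i := j))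
      have := hb.monotone (Fin.zero_le j.castSucc)
      omega
    rw [hdet]
    refine mul_pos hc (sum_pos' (fun g hg => det_binomialMatrix_nonneg
      (strictMono_succ_sub_zero_sub_one ha) (strictMono_of_mem_piFinset_Ico hb' hg))
      ⟨_, hmem, ih (strictMono_succ_sub_zero_sub_one ha) (strictMono_of_mem_piFinset_Ico hb' hmem)
        fun i => ?_⟩)
    have := hab i.succ; omega

end Ordered

lemma iteratedDeriv_pow_one_div_factorial {𝕜 : Type*} [NontriviallyNormedField 𝕜] [CharZero 𝕜]
    (k n : ℕ) : iteratedDeriv k (fun x : 𝕜 => x ^ n) 1 / k.factorial = n.choose k := by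
  rw [iteratedDeriv_pow, one_pow, mul_one, Nat.descFactorial_eq_factorial_mul_choose]
  push_cast
  exact mul_div_cancel_left₀ _ (Nat.cast_ne_zero.mpr k.factorial_ne_zero)

lemma strictMono_fin_of_strictMonoOn_Iic {β : Type*} [Preorder β] {f : ℕ → β} {p : ℕ}
    (hf : StrictMonoOn f (Set.Iic p)) : StrictMono fun i : Fin (p + 1) => f i :=
  fun i j hij => hf (Nat.lt_succ_iff.mp i.2) (Nat.lt_succ_iff.mp j.2) hij

theorem generalizedVandermonde_orderedSubPair_full_column_rank_general
    (m n p : ℕ) (r c α β : ℕ → ℕ) (hr : StrictMono r) (hc : StrictMono c)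
    (hsub : OrderedSubPair r c m n p α β) :
    (Matrix.of fun (i : Fin (m + 1)) (j : Fin (p + 1)) =>
        iteratedDeriv (r (i : ℕ)) (fun x : ℝ => x ^ c (β (j : ℕ))) 1 /
          (Nat.factorial (r (i : ℕ)))).rank = p + 1 := by
  obtain ⟨hα, hβ, hαp, -, hrc⟩ := hsub
  simp only [iteratedDeriv_pow_one_div_factorial]
  let rows : Fin (p + 1) → Fin (m + 1) := fun i =>
    ⟨α i, Nat.lt_succ_of_le ((hα.monotoneOn (Nat.lt_succ_iff.mp i.2) Set.self_mem_Iic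
      (Nat.lt_succ_iff.mp i.2)).trans hαp)⟩
  have hdet : 0 < (binomialMatrix ℝ (fun i : Fin (p + 1) => r (α i)) fun j => c (β j)).det :=
    det_binomialMatrix_pos (hr.comp (strictMono_fin_of_strictMonoOn_Iic hα))
      (hc.comp (strictMono_fin_of_strictMonoOn_Iic hβ)) fun i => hrc i (Nat.lt_succ_iff.mp i.2)
  have hsq : (of fun (i : Fin (m + 1)) (j : Fin (p + 1)) => ((c (β j)).choose (r i) : ℝ)).submatrix
      rows id = binomialMatrix ℝ (fun i => r (α i)) fun j => c (β j) := rfl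
  refine le_antisymm (rank_le_width _) ?_
  calc p + 1 = (binomialMatrix ℝ (fun i : Fin (p + 1) => r (α i)) fun j => c (β j)).rank := by
        rw [rank_of_det_ne_zero hdet.ne', Fintype.card_fin]
    _ ≤ _ := hsq ▸ rank_submatrix_le _ rows id

/-- If `r 0 ≤ c n` and `{r ∘ α, c ∘ β}` is an ordered sub-pair of length
`p + 1` for `{[r 0, …, r m], [c 0, …, c n]}`, then the `(m+1) × (p+1)` real
matrix `A = Λ_{1,r}ᵀ V_ĉ`, with `(i,j)` entry
`D^{r i}[x ↦ x ^ (c (β j))](1) / r i !`, has full column rank `p + 1`. -/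
theorem generalizedVandermonde_orderedSubPair_full_column_rank
    (m n p : ℕ) (r c α β : ℕ → ℕ) (hr : StrictMono r) (hc : StrictMono c)
    (h0 : r 0 ≤ c n) (hsub : OrderedSubPair r c m n p α β) :
    (Matrix.of fun (i : Fin (m + 1)) (j : Fin (p + 1)) =>
        iteratedDeriv (r (i : ℕ)) (fun x : ℝ => x ^ c (β (j : ℕ))) 1 /
          (Nat.factorial (r (i : ℕ)))).rank = p + 1 :=
  generalizedVandermonde_orderedSubPair_full_column_rank_general m n p r c α β hr hc hsub
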